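/- For any simple graph G with maximum degree Δ and maximum matching size ν, |E(G)| ≤ ν·(Δ + ⌊Δ/2⌋/⌈Δ/2⌉), i.e., ⌈Δ/2⌉·|E(G)| ≤ ν·(Δ·⌈Δ/2⌉ + ⌊Δ/2⌋). -/

import Mathlib

open scoped Classical

/-- `M` is a matching of `G`, given as a finite set of edges. -/
def IsMatchingFinset {V : Type*} (G : SimpleGraph V) (M : Finset (Sym2 V)) : Prop :=
  (M : Set (Sym2 V)) ⊆ G.edgeSet ∧
    ∀ e ∈ M, ∀ f ∈ M, e ≠ f → ∀ v : V, ¬(v ∈ e ∧ v ∈ f)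

/-- ν(G): the maximum size of a matching of `G`. -/
noncomputable def matchingNumber {V : Type*} (G : SimpleGraph V) : ℕ :=
  sSup {n | ∃ M : Finset (Sym2 V), IsMatchingFinset G M ∧ M.card = n}

/-- A proper edge coloring of `G` using colors `< n`. -/
def IsProperEdgeColoring {V : Type*} (G : SimpleGraph V) (n : ℕ) (c : Sym2 V → ℕ) : Prop :=
  (∀ e ∈ G.edgeSet, c e < n) ∧
    ∀ e ∈ G.edgeSet, ∀ f ∈ G.edgeSet, e ≠ f → (∃ v : V, v ∈ e ∧ v ∈ f) → c e ≠ c f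

/-- χ'(G): the edge chromatic index of `G`. -/
noncomputable def chromaticIndex {V : Type*} (G : SimpleGraph V) : ℕ :=
  sInf {n | ∃ c : Sym2 V → ℕ, IsProperEdgeColoring G n c}

/-- `G` is friendly-edge-colorable: its edge set is partitioned into maximum matchings. -/
noncomputable def Friendly {V : Type*} [Fintype V] (G : SimpleGraph V) : Prop :=
  ∃ P : Finset (Finset (Sym2 V)),
    (∀ M ∈ P, IsMatchingFinset G M ∧ M.card = matchingNumber G) ∧
    (∀ e, e ∈ G.edgeFinset ↔ ∃ M ∈ P, e ∈ M) ∧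
    ∀ M ∈ P, ∀ N ∈ P, M ≠ N → Disjoint M N

/-- The graph `G` with vertex `x` deleted. -/
def delVert {V : Type*} (G : SimpleGraph V) (x : V) : SimpleGraph {v : V // v ≠ x} :=
  G.induce {v : V | v ≠ x}

/-- `G` has a perfect matching. -/
def HasPerfectMatchingFinset {V : Type*} (G : SimpleGraph V) : Prop :=
  ∃ M : Finset (Sym2 V), IsMatchingFinset G M ∧ ∀ v : V, ∃ e ∈ M, v ∈ e

/-- `G` is factor-critical. -/
def FactorCritical {V : Type*} (G : SimpleGraph V) : Prop :=
  G.Connected ∧ ∀ x : V, HasPerfectMatchingFinset (delVert G x)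

/-!
Induction on the graph. If deleting the edges at some vertex `x` lowers `ν`, it removes at most
`Δ` edges while `ν` drops by one, and `⌈Δ/2⌉ Δ ≤ Δ ⌈Δ/2⌉ + ⌊Δ/2⌋`. Otherwise every vertex is
missed by some maximum matching, and Gallai's lemma says that a maximum matching `M` then misses
at most one vertex of each component. A component containing `a` edges of `M` thus has
`n ≤ 2a + 1` vertices, and its `m` edges satisfy `2m ≤ nΔ` and `2m ≤ n(n - 1)`: the first bound
gives `⌈Δ/2⌉ m ≤ a (Δ ⌈Δ/2⌉ + ⌊Δ/2⌋)` when `a ≥ ⌈Δ/2⌉`, the second one when `a < ⌈Δ/2⌉`.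

For Gallai's lemma take `M`-exposed vertices `u ≠ w` joined by a shortest walk `u, t, …, w`, with
`t` covered by `M`, and a maximum matching `N` missing `t` that shares as many edges with `M` as
possible. Exchanging `M` and `N` along the alternating path from `u` either turns `M` into a
maximum matching missing `t` and `w`, which are closer, or turns `N` into one missing `t` that
shares more edges with `M`.
-/

section

open SimpleGraph

variable {V : Type*} {H : SimpleGraph V}

def coveredVerts (M : Finset (Sym2 V)) : Set V := {v | ∃ e ∈ M, v ∈ e}

@[simp]
lemma mem_coveredVerts {M : Finset (Sym2 V)} {v : V} : v ∈ coveredVerts M ↔ ∃ e ∈ M, v ∈ e :=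
  Iff.rfl

lemma coveredVerts_mono {M M' : Finset (Sym2 V)} (h : M ⊆ M') : coveredVerts M ⊆ coveredVerts M' :=
  fun _ ⟨e, he, hv⟩ => ⟨e, h he, hv⟩

lemma coveredVerts_union (M N : Finset (Sym2 V)) :
    coveredVerts (M ∪ N) = coveredVerts M ∪ coveredVerts N := by
  ext v
  simp only [mem_coveredVerts, Finset.mem_union, Set.mem_union]
  grind

@[simp]
lemma coveredVerts_insert_mk (M : Finset (Sym2 V)) (a b : V) :
    coveredVerts (insert s(a, b) M) = insert a (insert b (coveredVerts M)) := by
  ext v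
  simp only [mem_coveredVerts, Finset.mem_insert, Set.mem_insert_iff]
  grind

lemma exists_mk_mem_of_mem_coveredVerts {M : Finset (Sym2 V)} {v : V} (hv : v ∈ coveredVerts M) :
    ∃ w, s(v, w) ∈ M := by
  obtain ⟨e, he, hve⟩ := hv
  obtain ⟨w, rfl⟩ := Sym2.mem_iff_exists.1 hve
  exact ⟨w, he⟩

namespace IsMatchingFinset

variable {M : Finset (Sym2 V)}

lemma subset {M' : Finset (Sym2 V)} (hM : IsMatchingFinset H M) (h : M' ⊆ M) :
    IsMatchingFinset H M' :=
  ⟨(Finset.coe_subset.2 h).trans hM.1, fun e he f hf => hM.2 e (h he) f (h hf)⟩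

lemma of_le {H' : SimpleGraph V} (hM : IsMatchingFinset H' M) (h : H' ≤ H) :
    IsMatchingFinset H M :=
  ⟨hM.1.trans (edgeSet_mono h), hM.2⟩

lemma eq_of_mem_of_mem (hM : IsMatchingFinset H M) {e f : Sym2 V} {v : V} (he : e ∈ M)
    (hf : f ∈ M) (hve : v ∈ e) (hvf : v ∈ f) : e = f :=
  by_contra fun hne => hM.2 e he f hf hne v ⟨hve, hvf⟩

lemma coveredVerts_erase_mk (hM : IsMatchingFinset H M) {a b : V} (hab : s(a, b) ∈ M) :
    coveredVerts (M.erase s(a, b)) = coveredVerts M \ {a, b} := by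
  ext v
  simp only [mem_coveredVerts, Finset.mem_erase, Set.mem_sdiff, Set.mem_insert_iff,
    Set.mem_singleton_iff]
  constructor
  · rintro ⟨e, ⟨hne, he⟩, hve⟩
    refine ⟨⟨e, he, hve⟩, fun hv => hne (hM.eq_of_mem_of_mem he hab hve ?_)⟩
    rcases hv with rfl | rfl <;> simp
  · rintro ⟨⟨e, he, hve⟩, hv⟩
    refine ⟨e, ⟨?_, he⟩, hve⟩
    rintro rfl
    exact hv (Sym2.mem_iff.1 hve)

lemma insert_mk (hM : IsMatchingFinset H M) {a b : V} (hab : H.Adj a b)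
    (ha : a ∉ coveredVerts M) (hb : b ∉ coveredVerts M) :
    IsMatchingFinset H (insert s(a, b) M) := by
  refine ⟨?_, ?_⟩
  · rw [Finset.coe_insert, Set.insert_subset_iff]
    exact ⟨hab, hM.1⟩
  · have hnew : ∀ f ∈ M, ∀ v, v ∈ s(a, b) → v ∉ f := by
      intro f hf v hv hvf
      rcases Sym2.mem_iff.1 hv with rfl | rfl
      exacts [ha ⟨f, hf, hvf⟩, hb ⟨f, hf, hvf⟩]
    intro e he f hf hef v ⟨hve, hvf⟩
    rcases Finset.mem_insert.1 he with rfl | he <;> rcases Finset.mem_insert.1 hf with rfl | hf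
    · exact hef rfl
    · exact hnew f hf v hve hvf
    · exact hnew e he v hvf hve
    · exact hM.2 e he f hf hef v ⟨hve, hvf⟩

lemma card_le_matchingNumber [Fintype V] (hM : IsMatchingFinset H M) :
    M.card ≤ matchingNumber H :=
  le_csSup ⟨Fintype.card (Sym2 V), fun _ ⟨N, _, hN⟩ => hN ▸ N.card_le_univ⟩ ⟨M, hM, rfl⟩

end IsMatchingFinset

def IsMaximumMatchingFinset (H : SimpleGraph V) (M : Finset (Sym2 V)) : Prop :=
  IsMatchingFinset H M ∧ M.card = matchingNumber H

lemma exists_isMaximumMatchingFinset [Fintype V] (H : SimpleGraph V) :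
    ∃ M, IsMaximumMatchingFinset H M :=
  Nat.sSup_mem (s := {n | ∃ M : Finset (Sym2 V), IsMatchingFinset H M ∧ M.card = n})
    ⟨0, ∅, ⟨by simp, by simp⟩, rfl⟩
    ⟨Fintype.card (Sym2 V), fun _ ⟨N, _, hN⟩ => hN ▸ N.card_le_univ⟩

/-- The outcome `M'`, `N'` of exchanging the edges of `M` and `N` along an alternating path from
`u` to `y`, recorded through its effect on covered vertices rather than through the path. -/
structure IsAlternatingSwitch (H : SimpleGraph V) (M N : Finset (Sym2 V)) (u y : V)
    (M' N' : Finset (Sym2 V)) : Prop where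
  isMatching_left : IsMatchingFinset H M'
  card_left : M'.card = M.card
  coveredVerts_left : coveredVerts M' ⊆ insert u (coveredVerts M)
  not_mem_left : y ∉ coveredVerts M'
  mem_left : y ∈ insert u (coveredVerts M)
  isMatching_right : IsMatchingFinset H N'
  card_right : N'.card = N.card
  coveredVerts_right : coveredVerts N' ⊆ insert y (coveredVerts N)
  not_mem_right : u ∉ coveredVerts N'
  mem_right : u ∈ insert y (coveredVerts N)
  inter_subset : M ∩ N ⊆ M ∩ N'

namespace IsAlternatingSwitch

variable {M N : Finset (Sym2 V)}

lemma refl (hM : IsMatchingFinset H M) (hN : IsMatchingFinset H N) {u : V}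
    (huM : u ∉ coveredVerts M) (huN : u ∉ coveredVerts N) :
    IsAlternatingSwitch H M N u u M N :=
  ⟨hM, rfl, Set.subset_insert _ _, huM, Set.mem_insert _ _, hN, rfl, Set.subset_insert _ _, huN,
    Set.mem_insert _ _, subset_rfl⟩

lemma cons (hM : IsMatchingFinset H M) (hN : IsMatchingFinset H N) {u x₁ x₂ y : V}
    (huM : u ∉ coveredVerts M) (he₁ : s(u, x₁) ∈ N) (hf₁ : s(x₁, x₂) ∈ M) {M' N' : Finset (Sym2 V)}
    (hs : IsAlternatingSwitch H (M.erase s(x₁, x₂)) (N.erase s(u, x₁)) x₂ y M' N') :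
    IsAlternatingSwitch H M N u y (insert s(u, x₁) M') (insert s(x₁, x₂) N') ∧
      M ∩ N ⊂ M ∩ insert s(x₁, x₂) N' := by
  have hux₁ : H.Adj u x₁ := hN.1 he₁
  have hx₁x₂ : H.Adj x₁ x₂ := hM.1 hf₁
  have hx₁M : x₁ ∈ coveredVerts M := ⟨_, hf₁, Sym2.mem_mk_left _ _⟩
  have hx₂M : x₂ ∈ coveredVerts M := ⟨_, hf₁, Sym2.mem_mk_right _ _⟩
  have huN : u ∈ coveredVerts N := ⟨_, he₁, Sym2.mem_mk_left _ _⟩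
  have hx₁N : x₁ ∈ coveredVerts N := ⟨_, he₁, Sym2.mem_mk_right _ _⟩
  have he₁M : s(u, x₁) ∉ M := fun h => huM ⟨_, h, Sym2.mem_mk_left _ _⟩
  have hf₁N : s(x₁, x₂) ∉ N := fun h => he₁M (hN.eq_of_mem_of_mem he₁ h
    (Sym2.mem_mk_right _ _) (Sym2.mem_mk_left _ _) ▸ hf₁)
  have hcovM := hM.coveredVerts_erase_mk hf₁
  have hcovN := hN.coveredVerts_erase_mk he₁
  have hcardM := Finset.card_erase_add_one hf₁
  have hcardN := Finset.card_erase_add_one he₁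
  have hne := hux₁.ne
  have hne' := hx₁x₂.ne
  obtain ⟨hM', hM'c, hM'cov, hyM', hyM, hN', hN'c, hN'cov, hx₂N', hx₂N, hinter⟩ := hs
  rw [hcovM] at hM'cov hyM
  rw [hcovN] at hN'cov hx₂N
  have huM' : u ∉ coveredVerts M' := fun h => by grind [hM'cov h]
  have hx₁M' : x₁ ∉ coveredVerts M' := fun h => by grind [hM'cov h]
  have hx₁N' : x₁ ∉ coveredVerts N' := fun h => by grind [hN'cov h]
  have hMN : M ∩ N ⊆ M ∩ insert s(x₁, x₂) N' := fun e he => by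
    have := @hinter e
    simp only [Finset.mem_inter, Finset.mem_erase, Finset.mem_insert] at he this ⊢
    grind
  refine ⟨⟨hM'.insert_mk hux₁ huM' hx₁M', ?_, ?_, ?_, ?_, hN'.insert_mk hx₁x₂ hx₁N' hx₂N', ?_, ?_,
    ?_, Set.mem_insert_of_mem _ huN, hMN⟩, ?_⟩
  · rw [Finset.card_insert_of_notMem (fun h => huM' ⟨_, h, Sym2.mem_mk_left _ _⟩)]
    omega
  · grind [coveredVerts_insert_mk]
  · grind [coveredVerts_insert_mk]
  · grind
  · rw [Finset.card_insert_of_notMem (fun h => hx₂N' ⟨_, h, Sym2.mem_mk_right _ _⟩)]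
    omega
  · grind [coveredVerts_insert_mk, mem_coveredVerts]
  · grind [coveredVerts_insert_mk]
  · exact (Finset.ssubset_iff_of_subset hMN).2 ⟨s(x₁, x₂), by simp [hf₁], by simp [hf₁N]⟩

end IsAlternatingSwitch

theorem IsMatchingFinset.exists_isAlternatingSwitch {M N : Finset (Sym2 V)}
    (hM : IsMatchingFinset H M) (hN : IsMatchingFinset H N)
    (hmax : ∀ L ⊆ M ∪ N, IsMatchingFinset H L → L.card ≤ M.card)
    {u : V} (huM : u ∉ coveredVerts M) (huN : u ∈ coveredVerts N) :
    ∃ y M' N', IsAlternatingSwitch H M N u y M' N' ∧ M ∩ N ⊂ M ∩ N' := by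
  induction N using Finset.strongInduction generalizing M u with
  | H N ih =>
  obtain ⟨x₁, he₁⟩ := exists_mk_mem_of_mem_coveredVerts huN
  have hux₁ : H.Adj u x₁ := hN.1 he₁
  have hne : s(u, x₁) ∉ M := fun h => huM ⟨_, h, Sym2.mem_mk_left _ _⟩
  have hx₁M : x₁ ∈ coveredVerts M := by_contra fun hx₁M => by
    have := hmax _ (Finset.insert_subset (Finset.mem_union_right _ he₁) Finset.subset_union_left)
      (hM.insert_mk hux₁ huM hx₁M)
    rw [Finset.card_insert_of_notMem hne] at this
    omega
  obtain ⟨x₂, hf₁⟩ := exists_mk_mem_of_mem_coveredVerts hx₁M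
  have hM₁ := hM.subset (M.erase_subset s(x₁, x₂))
  have hN₁ := hN.subset (N.erase_subset s(u, x₁))
  have hcovM₁ := hM.coveredVerts_erase_mk hf₁
  have hcovN₁ := hN.coveredVerts_erase_mk he₁
  have hx₂M₁ : x₂ ∉ coveredVerts (M.erase s(x₁, x₂)) := by simp [hcovM₁]
  suffices ∃ y M' N', IsAlternatingSwitch H (M.erase s(x₁, x₂)) (N.erase s(u, x₁)) x₂ y M' N' by
    obtain ⟨y, M', N', hs⟩ := this
    exact ⟨y, _, _, IsAlternatingSwitch.cons hM hN huM he₁ hf₁ hs⟩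
  by_cases hx₂N₁ : x₂ ∈ coveredVerts (N.erase s(u, x₁))
  · have hmax₁ : ∀ L ⊆ M.erase s(x₁, x₂) ∪ N.erase s(u, x₁), IsMatchingFinset H L →
        L.card ≤ (M.erase s(x₁, x₂)).card := by
      intro L hL hL'
      have hcov := hcovM₁ ▸ hcovN₁ ▸ coveredVerts_union _ _ ▸ coveredVerts_mono hL
      have hnu := hux₁.ne
      have hsub : insert s(u, x₁) L ⊆ M ∪ N :=
        Finset.insert_subset (Finset.mem_union_right _ he₁) (hL.trans
          (Finset.union_subset_union (M.erase_subset _) (N.erase_subset _)))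
      have := hmax _ hsub (hL'.insert_mk hux₁ (fun h => by grind) (fun h => by grind))
      rw [Finset.card_insert_of_notMem (fun h => by grind [hcov ⟨_, h, Sym2.mem_mk_left _ _⟩]),
        ← Finset.card_erase_add_one hf₁] at this
      omega
    obtain ⟨y, M', N', hs, -⟩ := ih _ (Finset.erase_ssubset he₁) hM₁ hN₁ hmax₁ hx₂M₁ hx₂N₁
    exact ⟨y, M', N', hs⟩
  · exact ⟨x₂, _, _, .refl hM₁ hN₁ hx₂M₁ hx₂N₁⟩

namespace IsMaximumMatchingFinset

variable [Fintype V] {M : Finset (Sym2 V)}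

lemma not_adj (hM : IsMaximumMatchingFinset H M) {u w : V} (hu : u ∉ coveredVerts M)
    (hw : w ∉ coveredVerts M) : ¬ H.Adj u w := fun huw => by
  have := (hM.1.insert_mk huw hu hw).card_le_matchingNumber
  rw [Finset.card_insert_of_notMem (fun h => hu ⟨_, h, Sym2.mem_mk_left _ _⟩), hM.2] at this
  omega

theorem eq_of_reachable (hin : ∀ v, ∃ N, IsMaximumMatchingFinset H N ∧ v ∉ coveredVerts N)
    (hM : IsMaximumMatchingFinset H M) {u w : V} (hu : u ∉ coveredVerts M)
    (hw : w ∉ coveredVerts M) (huw : H.Reachable u w) : u = w := by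
  obtain ⟨p⟩ := huw
  induction p generalizing M with
  | nil => rfl
  | @cons u t w hut q ih =>
  by_contra huw
  have htM : t ∈ coveredVerts M := by_contra fun htM => hM.not_adj hu htM hut
  obtain ⟨N, hNmem, hNmax⟩ := (Finset.univ.filter fun N =>
      IsMaximumMatchingFinset H N ∧ t ∉ coveredVerts N).exists_max_image (fun N => (M ∩ N).card)
    (by obtain ⟨N, hN⟩ := hin t; exact ⟨N, by simpa using hN⟩)
  obtain ⟨hN, htN⟩ := (Finset.mem_filter.1 hNmem).2
  have huN : u ∈ coveredVerts N := by_contra fun huN => hN.not_adj huN htN hut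
  obtain ⟨y, M', N', hs, hlt⟩ :=
    hM.1.exists_isAlternatingSwitch hN.1 (fun L _ hL => hM.2 ▸ hL.card_le_matchingNumber) hu huN
  by_cases hyt : y = t
  · subst hyt
    have hwM' : w ∉ coveredVerts M' :=
      fun h => (hs.coveredVerts_left h).elim (fun h => huw h.symm) hw
    exact hw (ih ⟨hs.isMatching_left, hs.card_left.trans hM.2⟩ hs.not_mem_left hwM' ▸ htM)
  · have htN' : t ∉ coveredVerts N' :=
      fun h => (hs.coveredVerts_right h).elim (fun h => hyt h.symm) htN
    have := hNmax N' (Finset.mem_filter.2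
      ⟨Finset.mem_univ _, ⟨hs.isMatching_right, hs.card_right.trans hN.2⟩, htN'⟩)
    exact (Finset.card_lt_card hlt).not_ge this

end IsMaximumMatchingFinset

lemma two_mul_card_eq_sum_card_filter_mem {F : Finset (Sym2 V)} {S : Finset V}
    (hF : ∀ e ∈ F, ¬ e.IsDiag) (hS : ∀ e ∈ F, ∀ v ∈ e, v ∈ S) :
    2 * F.card = ∑ v ∈ S, (F.filter (v ∈ ·)).card := by
  have hends : ∀ e ∈ F, (S.filter (· ∈ e)).card = 2 := fun e he => by
    rw [← Sym2.card_toFinset_of_not_isDiag e (hF e he)]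
    congr 1
    ext v
    simpa using hS e he v
  calc 2 * F.card = ∑ e ∈ F, (S.filter (· ∈ e)).card := by
        rw [Finset.sum_congr rfl hends, Finset.sum_const, smul_eq_mul, mul_comm]
    _ = ∑ v ∈ S, (F.filter (v ∈ ·)).card :=
        Finset.sum_card_bipartiteAbove_eq_sum_card_bipartiteBelow (fun e v => v ∈ e)

lemma ceilHalf_mul_le_of_le_two_mul_add_one {D a m n : ℕ} (hdeg : 2 * m ≤ n * D)
    (hsimple : 2 * m ≤ n * (n - 1)) (hn : n ≤ 2 * a + 1) :
    (D + 1) / 2 * m ≤ a * (D * ((D + 1) / 2) + D / 2) := by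
  by_cases ha : (D + 1) / 2 ≤ a
  · have hm : m ≤ a * D + D / 2 := by
      have : 2 * m ≤ 2 * (a * D) + D := hdeg.trans (by nlinarith)
      omega
    calc (D + 1) / 2 * m ≤ (D + 1) / 2 * (a * D) + (D + 1) / 2 * (D / 2) := by
          rw [← mul_add]; exact Nat.mul_le_mul_left _ hm
      _ ≤ (D + 1) / 2 * (a * D) + a * (D / 2) := by gcongr
      _ = a * (D * ((D + 1) / 2) + D / 2) := by ring
  · have hm : m ≤ a * D := by
      have h2a : 2 * a + 1 ≤ D := by omega
      have : n * (n - 1) ≤ (2 * a + 1) * (2 * a) := Nat.mul_le_mul hn (by omega)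
      nlinarith
    calc (D + 1) / 2 * m ≤ (D + 1) / 2 * (a * D) := Nat.mul_le_mul_left _ hm
      _ = a * (D * ((D + 1) / 2)) := by ring
      _ ≤ a * (D * ((D + 1) / 2) + D / 2) := Nat.mul_le_mul_left _ (Nat.le_add_right _ _)

namespace SimpleGraph.ConnectedComponent

/-- The component containing the edge `e`; for a non-edge, that of an arbitrary endpoint. -/
noncomputable def ofEdge (H : SimpleGraph V) (e : Sym2 V) : H.ConnectedComponent :=
  H.connectedComponentMk (Quot.out e).1

lemma ofEdge_eq {e : Sym2 V} (he : e ∈ H.edgeSet) {v : V} (hv : v ∈ e) :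
    ofEdge H e = H.connectedComponentMk v := by
  have hout : e = s((Quot.out e).1, (Quot.out e).2) := (Quot.out_eq e).symm
  rw [hout] at he hv
  rcases Sym2.mem_iff.1 hv with rfl | rfl
  · rfl
  · exact ConnectedComponent.sound he.reachable

variable [Fintype V] (c : H.ConnectedComponent)

lemma degree_lt_card_supp {v : V} (hv : v ∈ c.supp) : H.degree v < c.supp.toFinset.card := by
  rw [← card_neighborFinset_eq_degree]
  refine Finset.card_lt_card ⟨fun w hw => ?_, fun h => ?_⟩
  · exact Set.mem_toFinset.2 ((c.mem_supp_congr_adj ((mem_neighborFinset _ _ _).1 hw)).1 hv)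
  · exact H.irrefl ((mem_neighborFinset _ _ _).1 (h (Set.mem_toFinset.2 hv)))

lemma two_mul_card_edges_le {b : ℕ} (hb : ∀ v ∈ c.supp, H.degree v ≤ b) :
    2 * (H.edgeFinset.filter (ofEdge H · = c)).card ≤ c.supp.toFinset.card * b := by
  rw [two_mul_card_eq_sum_card_filter_mem (S := c.supp.toFinset)]
  · refine (Finset.sum_le_card_nsmul _ _ _ fun v hv => ?_).trans_eq (smul_eq_mul _ _)
    rw [Set.mem_toFinset] at hv
    refine (Finset.card_le_card fun e he => ?_).trans
      ((card_incidenceFinset_eq_degree H v).le.trans (hb v hv))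
    simp only [Finset.mem_filter, mem_edgeFinset] at he
    exact (mem_incidenceFinset _ _ _).2 ⟨he.1.1, he.2⟩
  · intro e he
    exact H.not_isDiag_of_mem_edgeSet (mem_edgeFinset.1 (Finset.mem_filter.1 he).1)
  · intro e he v hv
    simp only [Finset.mem_filter, mem_edgeFinset] at he
    rw [Set.mem_toFinset, mem_supp_iff, ← ofEdge_eq he.1 hv, he.2]

lemma card_supp_le_two_mul_add_one {M : Finset (Sym2 V)} (hM : IsMatchingFinset H M)
    (hexposed : ∀ u ∈ c.supp, ∀ w ∈ c.supp, u ∉ coveredVerts M → w ∉ coveredVerts M → u = w) :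
    c.supp.toFinset.card ≤ 2 * (M.filter (ofEdge H · = c)).card + 1 := by
  set S := c.supp.toFinset
  set Mc := M.filter (ofEdge H · = c)
  have hcovered : (S.filter (· ∈ coveredVerts M)).card ≤ 2 * Mc.card := by
    have hsub : S.filter (· ∈ coveredVerts M) ⊆ Mc.biUnion Sym2.toFinset := fun v hv => by
      simp only [Finset.mem_filter, Set.mem_toFinset, mem_supp_iff, S] at hv
      obtain ⟨hvc, e, heM, hve⟩ := hv
      refine Finset.mem_biUnion.2 ⟨e, Finset.mem_filter.2 ⟨heM, ?_⟩, Sym2.mem_toFinset.2 hve⟩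
      exact (ofEdge_eq (hM.1 heM) hve).trans hvc
    refine (Finset.card_le_card hsub).trans (Finset.card_biUnion_le.trans ?_)
    refine (Finset.sum_le_card_nsmul _ _ 2 fun e he => ?_).trans_eq (by rw [smul_eq_mul, mul_comm])
    rw [Sym2.card_toFinset]
    split_ifs <;> omega
  have hexposed' : (S.filter (· ∉ coveredVerts M)).card ≤ 1 :=
    Finset.card_le_one.2 fun u hu w hw => by
      simp only [Finset.mem_filter, Set.mem_toFinset, S] at hu hw
      exact hexposed u hu.1 w hw.1 hu.2 hw.2
  have := Finset.card_filter_add_card_filter_not (s := S) (· ∈ coveredVerts M)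
  omega

end SimpleGraph.ConnectedComponent

theorem ceilHalf_mul_card_edgeFinset_le_of_reachable_exposed [Fintype V] {D : ℕ}
    (hdeg : ∀ v, H.degree v ≤ D) {M : Finset (Sym2 V)} (hM : IsMatchingFinset H M)
    (hexposed : ∀ u w, u ∉ coveredVerts M → w ∉ coveredVerts M → H.Reachable u w → u = w) :
    (D + 1) / 2 * H.edgeFinset.card ≤ M.card * (D * ((D + 1) / 2) + D / 2) := by
  rw [Finset.card_eq_sum_card_fiberwise (f := ConnectedComponent.ofEdge H) (t := Finset.univ)
      (fun _ _ => Finset.mem_univ _),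
    Finset.card_eq_sum_card_fiberwise (f := ConnectedComponent.ofEdge H) (t := Finset.univ)
      (fun _ _ => Finset.mem_univ _), Finset.mul_sum, Finset.sum_mul]
  refine Finset.sum_le_sum fun c _ => ceilHalf_mul_le_of_le_two_mul_add_one
    (c.two_mul_card_edges_le fun v _ => hdeg v)
    (c.two_mul_card_edges_le fun v hv => Nat.le_sub_one_of_lt (c.degree_lt_card_supp hv))
    (c.card_supp_le_two_mul_add_one hM fun u hu w hw hu' hw' =>
      hexposed u w hu' hw' (c.reachable_of_mem_supp hu hw))

lemma exists_isMaximumMatchingFinset_notMem [Fintype V] {v : V}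
    (hv : matchingNumber H ≤ matchingNumber (H.deleteIncidenceSet v)) :
    ∃ N, IsMaximumMatchingFinset H N ∧ v ∉ coveredVerts N := by
  obtain ⟨N, hN, hNc⟩ := exists_isMaximumMatchingFinset (H.deleteIncidenceSet v)
  have hNH := hN.of_le (H.deleteIncidenceSet_le v)
  refine ⟨N, ⟨hNH, le_antisymm hNH.card_le_matchingNumber (hNc ▸ hv)⟩, fun ⟨e, he, hve⟩ => ?_⟩
  have := hN.1 he
  rw [edgeSet_deleteIncidenceSet] at this
  exact this.2 ⟨this.1, hve⟩

theorem ceilHalf_mul_card_edgeFinset_le [Fintype V] (D : ℕ) (H : SimpleGraph V)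
    (hdeg : ∀ v, H.degree v ≤ D) :
    (D + 1) / 2 * H.edgeFinset.card ≤ matchingNumber H * (D * ((D + 1) / 2) + D / 2) := by
  induction H using WellFoundedLT.induction with
  | _ H ih =>
  by_cases hess : ∃ x, matchingNumber (H.deleteIncidenceSet x) < matchingNumber H
  · obtain ⟨x, hx⟩ := hess
    have hle := H.deleteIncidenceSet_le x
    have ih' := ih _ (hle.lt_of_ne fun h => hx.ne (by rw [h]))
      fun v => (by convert degree_le_of_le hle : _ ≤ H.degree v).trans (hdeg v)
    have hE := H.card_edgeFinset_deleteIncidenceSet x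
    have hdegx : H.degree x ≤ H.edgeFinset.card :=
      card_incidenceFinset_eq_degree H x ▸ Finset.card_le_card (H.incidenceFinset_subset x)
    calc (D + 1) / 2 * H.edgeFinset.card
        = (D + 1) / 2 * (H.deleteIncidenceSet x).edgeFinset.card + (D + 1) / 2 * H.degree x := by
          rw [← mul_add]; congr 1; omega
      _ ≤ matchingNumber (H.deleteIncidenceSet x) * (D * ((D + 1) / 2) + D / 2) +
          (D * ((D + 1) / 2) + D / 2) := by
          refine Nat.add_le_add (by convert ih') ?_
          rw [mul_comm]
          exact (Nat.mul_le_mul_right _ (hdeg x)).trans (Nat.le_add_right _ _)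
      _ = (matchingNumber (H.deleteIncidenceSet x) + 1) * (D * ((D + 1) / 2) + D / 2) := by ring
      _ ≤ matchingNumber H * (D * ((D + 1) / 2) + D / 2) := Nat.mul_le_mul_right _ hx
  · push Not at hess
    obtain ⟨M, hM⟩ := exists_isMaximumMatchingFinset H
    exact hM.2 ▸ ceilHalf_mul_card_edgeFinset_le_of_reachable_exposed hdeg hM.1
      fun _ _ hu hw huw => hM.eq_of_reachable
        (fun v => exists_isMaximumMatchingFinset_notMem (hess v)) hu hw huw

end

theorem stmt_1_general {V : Type*} [Fintype V] (G : SimpleGraph V) :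
    ((G.maxDegree + 1) / 2) * G.edgeFinset.card ≤
      matchingNumber G * (G.maxDegree * ((G.maxDegree + 1) / 2) + G.maxDegree / 2) :=
  ceilHalf_mul_card_edgeFinset_le G.maxDegree G G.degree_le_maxDegree

theorem stmt_1 {V : Type*} [Fintype V] (G : SimpleGraph V)
    (hiso : ∀ v : V, 0 < G.degree v) :
    ((G.maxDegree + 1) / 2) * G.edgeFinset.card ≤
      matchingNumber G * (G.maxDegree * ((G.maxDegree + 1) / 2) + G.maxDegree / 2) :=
  stmt_1_general G
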